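/- Assume λ > I. Let u, v : ℝⁿ → ℝ be measurable, square-integrable functions with u = 0 and v = 0 almost everywhere on ℝⁿ∖Ω. Then ∬_{{(x,y) : x ∈ Ω_I, y ∈ Ω∪Ω_I, |y−x| ≥ λ}} |u(y)·v(y)|/|y−x|^{n+2s} dy dx ≤ (n·ωₙ/(2·s·(λ−I)^{2s}))·‖u‖_{L²(Ω)}·‖v‖_{L²(Ω)}. -/

import Mathlib

/-!
Only the constraint `|y - x| ≥ λ` matters. Enlarging the domain to all such pairs, Tonelli and
translation invariance split the integral into `∫ |u v|` times
`∫_{|z| ≥ λ} |z|^{-n-2s} dz = n ωₙ λ^{-2s} / (2s)` (polar coordinates). Cauchy–Schwarz bounds the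
first factor by `‖u‖_{L²(Ω)} ‖v‖_{L²(Ω)}`, and `λ^{2s} ≥ (λ - I)^{2s}` since `I ≥ 0`.
-/

open MeasureTheory Real Set

noncomputable section

abbrev Eucl (n : ℕ) := EuclideanSpace ℝ (Fin n)

/-- `ωₙ`, the Lebesgue measure of the unit ball of `ℝⁿ`. -/
def unitBallVol (n : ℕ) : ℝ := (volume (Metric.ball (0 : Eucl n) 1)).toReal

/-- The interaction domain `Ω_I = {y ∈ ℝⁿ∖Ω : |y−x| < λ for some x ∈ Ω}`. -/
def interDom {n : ℕ} (Ω : Set (Eucl n)) (lam : ℝ) : Set (Eucl n) :=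
  {y | y ∉ Ω ∧ ∃ x ∈ Ω, ‖y - x‖ < lam}

/-- The `L²(Ω)` norm. -/
def L2NormOn {n : ℕ} (Ω : Set (Eucl n)) (v : Eucl n → ℝ) : ℝ :=
  Real.sqrt (∫ x in Ω, v x ^ 2)

open Module
open scoped ENNReal

theorem lintegral_prod_mul_comp_sub {G : Type*} [AddGroup G] [MeasurableSpace G]
    [MeasurableAdd G] [MeasurableNeg G] [MeasurableSub₂ G] (μ : Measure G) [SFinite μ]
    [μ.IsAddLeftInvariant] [μ.IsNegInvariant] {f g : G → ℝ≥0∞} (hf : Measurable f)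
    (hg : Measurable g) :
    ∫⁻ p, f p.2 * g (p.2 - p.1) ∂μ.prod μ = (∫⁻ y, f y ∂μ) * ∫⁻ z, g z ∂μ := by
  have hprod : Measurable fun p : G × G => f p.2 * g (p.2 - p.1) := by fun_prop
  rw [lintegral_prod_symm' _ hprod, ← lintegral_mul_const _ hf]
  refine lintegral_congr fun y => ?_
  change ∫⁻ x, f y * g (y - x) ∂μ = _
  rw [lintegral_const_mul _ (by fun_prop), lintegral_sub_left_eq_self]

theorem lintegral_ofReal_sq_rpow_half {α : Type*} [MeasurableSpace α] {μ : Measure α}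
    {u : α → ℝ} (hu2 : Integrable (fun x => u x ^ 2) μ) :
    (∫⁻ x, ENNReal.ofReal (u x ^ 2) ∂μ) ^ (1 / 2 : ℝ) =
      ENNReal.ofReal (sqrt (∫ x, u x ^ 2 ∂μ)) := by
  rw [← ofReal_integral_eq_lintegral_ofReal hu2 (.of_forall fun x => sq_nonneg _), sqrt_eq_rpow,
    ENNReal.ofReal_rpow_of_nonneg (integral_nonneg fun x => sq_nonneg _) (by norm_num)]

theorem lintegral_ofReal_abs_mul_le {α : Type*} [MeasurableSpace α] {μ : Measure α}
    {u v : α → ℝ} (hu : AEMeasurable u μ) (hv : AEMeasurable v μ)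
    (hu2 : Integrable (fun x => u x ^ 2) μ) (hv2 : Integrable (fun x => v x ^ 2) μ) :
    ∫⁻ y, ENNReal.ofReal |u y * v y| ∂μ ≤
      ENNReal.ofReal (sqrt (∫ x, u x ^ 2 ∂μ)) * ENNReal.ofReal (sqrt (∫ x, v x ^ 2 ∂μ)) := by
  have hsq : ∀ w : α → ℝ, ∀ y, ENNReal.ofReal |w y| ^ (2 : ℝ) = ENNReal.ofReal (w y ^ 2) :=
    fun w y => by
      rw [ENNReal.ofReal_rpow_of_nonneg (abs_nonneg _) zero_le_two, rpow_two, sq_abs]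
  rw [← lintegral_ofReal_sq_rpow_half hu2, ← lintegral_ofReal_sq_rpow_half hv2]
  simp_rw [abs_mul, ENNReal.ofReal_mul (abs_nonneg _), ← hsq]
  exact ENNReal.lintegral_mul_le_Lp_mul_Lq μ .two_two hu.abs.ennreal_ofReal hv.abs.ennreal_ofReal

section AddHaar

variable {E : Type*} [NormedAddCommGroup E] [NormedSpace ℝ E] [FiniteDimensional ℝ E]
  [MeasurableSpace E] [BorelSpace E] (μ : Measure E) [μ.IsAddHaarMeasure]

theorem integral_indicator_Ici_norm_rpow_neg {R a : ℝ} (hR : 0 < R) (ha : 0 < a) :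
    ∫ z, (Ici R).indicator (fun t : ℝ => t ^ (-(finrank ℝ E + a))) ‖z‖ ∂μ =
      finrank ℝ E * μ.real (Metric.ball 0 1) * (R ^ (-a) / a) := by
  rcases subsingleton_or_nontrivial E with hE | hE
  · simp [norm_of_subsingleton, hR.not_ge, finrank_zero_of_subsingleton]
  have hpow : ∀ y ∈ Ici R, y ^ (finrank ℝ E - 1) * y ^ (-(finrank ℝ E + a) : ℝ) =
      y ^ (-1 - a) := fun y hy => by
    have hy0 : 0 < y := hR.trans_le hy
    rw [← rpow_natCast, Nat.cast_sub finrank_pos, ← rpow_add hy0, Nat.cast_one]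
    ring_nf
  have hradial : ∫ y in Ioi (0 : ℝ), y ^ (finrank ℝ E - 1) •
      (Ici R).indicator (fun t : ℝ => t ^ (-(finrank ℝ E + a))) y = ∫ y in Ioi R, y ^ (-1 - a) := by
    simp_rw [smul_eq_mul, ← indicator_mul_right (Ici R) fun y : ℝ => y ^ (finrank ℝ E - 1)]
    rw [setIntegral_indicator measurableSet_Ici,
      inter_eq_self_of_subset_right (Ici_subset_Ioi.2 hR), ← integral_Ici_eq_integral_Ioi]
    exact setIntegral_congr_fun measurableSet_Ici hpow
  rw [integral_fun_norm_addHaar, hradial, integral_Ioi_rpow_of_lt (by linarith) hR,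
    nsmul_eq_mul, smul_eq_mul]
  ring_nf

theorem lintegral_indicator_Ici_norm_rpow_neg {R a : ℝ} (hR : 0 < R) (ha : 0 < a) :
    ∫⁻ z, ENNReal.ofReal ((Ici R).indicator (fun t : ℝ => t ^ (-(finrank ℝ E + a))) ‖z‖) ∂μ =
      ENNReal.ofReal (finrank ℝ E * μ.real (Metric.ball 0 1) * (R ^ (-a) / a)) := by
  have hnonneg : ∀ z : E, 0 ≤ (Ici R).indicator (fun t : ℝ => t ^ (-(finrank ℝ E + a))) ‖z‖ :=
    fun z => indicator_nonneg (fun t (ht : R ≤ t) => rpow_nonneg (hR.le.trans ht) _) _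
  have hint : Integrable (fun z : E =>
      (Ici R).indicator (fun t : ℝ => t ^ (-(finrank ℝ E + a))) ‖z‖) μ := by
    rcases subsingleton_or_nontrivial E with hE | hE
    · simp [norm_of_subsingleton, hR.not_ge]
    -- a non-integrable function would have integral `0`
    refine Integrable.of_integral_ne_zero ?_
    rw [integral_indicator_Ici_norm_rpow_neg μ hR ha]
    have hdim : 0 < (finrank ℝ E : ℝ) := Nat.cast_pos.2 finrank_pos
    have hball : 0 < μ.real (Metric.ball 0 1) :=
      ENNReal.toReal_pos (Metric.measure_ball_pos μ 0 one_pos).ne' measure_ball_lt_top.ne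
    positivity
  rw [← ofReal_integral_eq_lintegral_ofReal hint (.of_forall hnonneg),
    integral_indicator_Ici_norm_rpow_neg μ hR ha]

theorem setLIntegral_mul_norm_sub_rpow_neg {R a : ℝ} (hR : 0 < R) (ha : 0 < a)
    {c : E → ℝ≥0∞} (hc : Measurable c) :
    ∫⁻ p in {p : E × E | R ≤ ‖p.2 - p.1‖},
        c p.2 * ENNReal.ofReal (‖p.2 - p.1‖ ^ (-(finrank ℝ E + a))) ∂μ.prod μ =
      (∫⁻ y, c y ∂μ) *
        ENNReal.ofReal (finrank ℝ E * μ.real (Metric.ball 0 1) * (R ^ (-a) / a)) := by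
  set k : ℝ → ℝ := (Ici R).indicator fun t => t ^ (-(finrank ℝ E + a))
  have hk : Measurable k := (measurable_id.pow_const _).indicator measurableSet_Ici
  have hfar : MeasurableSet {p : E × E | R ≤ ‖p.2 - p.1‖} :=
    measurableSet_le measurable_const (by fun_prop)
  have hind : {p : E × E | R ≤ ‖p.2 - p.1‖}.indicator
      (fun p => c p.2 * ENNReal.ofReal (‖p.2 - p.1‖ ^ (-(finrank ℝ E + a)))) =
      fun p => c p.2 * ENNReal.ofReal (k ‖p.2 - p.1‖) := by
    funext p
    by_cases hp : R ≤ ‖p.2 - p.1‖ <;> simp [k, hp]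
  rw [← lintegral_indicator hfar, hind,
    lintegral_prod_mul_comp_sub μ hc (g := fun z => ENNReal.ofReal (k ‖z‖))
      (hk.comp measurable_norm).ennreal_ofReal,
    lintegral_indicator_Ici_norm_rpow_neg μ hR ha]

theorem setIntegral_abs_mul_div_norm_sub_rpow_le {R a : ℝ} (hR : 0 < R) (ha : 0 < a)
    {S : Set (E × E)} (hS : S ⊆ {p | R ≤ ‖p.2 - p.1‖}) {u v : E → ℝ}
    (hu : Measurable u) (hv : Measurable v)
    (hu2 : Integrable (fun x => u x ^ 2) μ) (hv2 : Integrable (fun x => v x ^ 2) μ) :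
    ∫ p in S, |u p.2 * v p.2| / ‖p.2 - p.1‖ ^ ((finrank ℝ E : ℝ) + a) ∂μ.prod μ ≤
      finrank ℝ E * μ.real (Metric.ball 0 1) * (R ^ (-a) / a) *
        sqrt (∫ x, u x ^ 2 ∂μ) * sqrt (∫ x, v x ^ 2 ∂μ) := by
  set K := finrank ℝ E * μ.real (Metric.ball 0 1) * (R ^ (-a) / a)
  have hpoint : ∀ p : E × E,
      ENNReal.ofReal ‖|u p.2 * v p.2| / ‖p.2 - p.1‖ ^ ((finrank ℝ E : ℝ) + a)‖ =
        ENNReal.ofReal |u p.2 * v p.2| *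
          ENNReal.ofReal (‖p.2 - p.1‖ ^ (-((finrank ℝ E : ℝ) + a))) := fun p => by
    rw [norm_of_nonneg (by positivity), rpow_neg (norm_nonneg _), div_eq_mul_inv,
      ENNReal.ofReal_mul (abs_nonneg _)]
  have hbound : ∫⁻ p in S,
      ENNReal.ofReal ‖|u p.2 * v p.2| / ‖p.2 - p.1‖ ^ ((finrank ℝ E : ℝ) + a)‖ ∂μ.prod μ ≤
        ENNReal.ofReal (K * sqrt (∫ x, u x ^ 2 ∂μ) * sqrt (∫ x, v x ^ 2 ∂μ)) := by
    simp_rw [hpoint]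
    calc _ ≤ ∫⁻ p in {p : E × E | R ≤ ‖p.2 - p.1‖}, ENNReal.ofReal |u p.2 * v p.2| *
            ENNReal.ofReal (‖p.2 - p.1‖ ^ (-((finrank ℝ E : ℝ) + a))) ∂μ.prod μ :=
          lintegral_mono_set hS
      _ = (∫⁻ y, ENNReal.ofReal |u y * v y| ∂μ) * ENNReal.ofReal K :=
          setLIntegral_mul_norm_sub_rpow_neg μ hR ha (hu.mul hv).abs.ennreal_ofReal
      _ ≤ ENNReal.ofReal (sqrt (∫ x, u x ^ 2 ∂μ)) * ENNReal.ofReal (sqrt (∫ x, v x ^ 2 ∂μ)) *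
            ENNReal.ofReal K := by
          gcongr
          exact lintegral_ofReal_abs_mul_le hu.aemeasurable hv.aemeasurable hu2 hv2
      _ = _ := by
          rw [← ENNReal.ofReal_mul (sqrt_nonneg _), ← ENNReal.ofReal_mul (by positivity)]
          ring_nf
  calc _ ≤ ‖∫ p in S, |u p.2 * v p.2| / ‖p.2 - p.1‖ ^ ((finrank ℝ E : ℝ) + a) ∂μ.prod μ‖ :=
        le_norm_self _
    _ ≤ _ := norm_integral_le_lintegral_norm _
    _ ≤ _ := ENNReal.toReal_le_of_le_ofReal (by positivity) hbound

end AddHaar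

theorem L2NormOn_eq_sqrt_integral {n : ℕ} {Ω : Set (Eucl n)} {u : Eucl n → ℝ}
    (hu0 : ∀ᵐ x ∂volume, x ∉ Ω → u x = 0) : L2NormOn Ω u = sqrt (∫ x, u x ^ 2) := by
  rw [L2NormOn, setIntegral_eq_integral_of_ae_compl_eq_zero]
  filter_upwards [hu0] with x hx hxΩ
  simp [hx hxΩ]

theorem rpow_neg_div_le_one_div_mul_rpow {R d b : ℝ} (hd : 0 < d) (hdR : d ≤ R) (hb : 0 < b) :
    R ^ (-b) / b ≤ 1 / (b * d ^ b) := by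
  calc R ^ (-b) / b = 1 / (b * R ^ b) := by rw [rpow_neg (hd.le.trans hdR)]; ring
    _ ≤ 1 / (b * d ^ b) := by gcongr

theorem stmt6_general (n : ℕ) (s : ℝ) (hs : s ∈ Set.Ioo (0 : ℝ) 1)
    (Ω : Set (Eucl n))
    (lam : ℝ) (hlam : Metric.diam Ω < lam)
    (u v : Eucl n → ℝ) (hu : Measurable u) (hv : Measurable v)
    (hu2 : Integrable (fun x => u x ^ 2)) (hv2 : Integrable (fun x => v x ^ 2))
    (hu0 : ∀ᵐ x ∂volume, x ∉ Ω → u x = 0) (hv0 : ∀ᵐ x ∂volume, x ∉ Ω → v x = 0) :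
    ∫ p in {p : Eucl n × Eucl n |
        p.1 ∈ interDom Ω lam ∧ p.2 ∈ Ω ∪ interDom Ω lam ∧ lam ≤ ‖p.2 - p.1‖},
        |u p.2 * v p.2| / ‖p.2 - p.1‖ ^ ((n : ℝ) + 2 * s) ≤
      (n : ℝ) * unitBallVol n / (2 * s * (lam - Metric.diam Ω) ^ (2 * s)) *
        L2NormOn Ω u * L2NormOn Ω v := by
  have hs0 : 0 < 2 * s := by linarith [hs.1]
  have hgap : 0 < lam - Metric.diam Ω := sub_pos.2 hlam
  have hgap_le : lam - Metric.diam Ω ≤ lam := sub_le_self _ Metric.diam_nonneg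
  have hfar := setIntegral_abs_mul_div_norm_sub_rpow_le volume (hgap.trans_le hgap_le) hs0
    (S := {p : Eucl n × Eucl n |
      p.1 ∈ interDom Ω lam ∧ p.2 ∈ Ω ∪ interDom Ω lam ∧ lam ≤ ‖p.2 - p.1‖})
    (fun p hp => hp.2.2) hu hv hu2 hv2
  rw [finrank_euclideanSpace_fin, ← Measure.volume_eq_prod] at hfar
  refine hfar.trans ?_
  rw [L2NormOn_eq_sqrt_integral hu0, L2NormOn_eq_sqrt_integral hv0, unitBallVol,
    ← measureReal_def, ← mul_one_div (_ * _)]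
  gcongr _ * ?_ * _ * _
  exact rpow_neg_div_le_one_div_mul_rpow hgap hgap_le hs0

/-- Assume `λ > I = diam Ω`. For measurable, square-integrable
`u, v : ℝⁿ → ℝ` vanishing a.e. off `Ω`,
`∬_{{(x,y) : x ∈ Ω_I, y ∈ Ω∪Ω_I, |y−x| ≥ λ}} |u(y)·v(y)|/|y−x|^{n+2s} dy dx
  ≤ (n·ωₙ/(2·s·(λ−I)^{2s}))·‖u‖_{L²(Ω)}·‖v‖_{L²(Ω)}`. -/
theorem stmt6 (n : ℕ) (hn : 1 ≤ n) (s : ℝ) (hs : s ∈ Set.Ioo (0 : ℝ) 1)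
    (Ω : Set (Eucl n)) (hΩne : Ω.Nonempty) (hΩo : IsOpen Ω) (hΩb : Bornology.IsBounded Ω)
    (lam : ℝ) (hlam : Metric.diam Ω < lam)
    (u v : Eucl n → ℝ) (hu : Measurable u) (hv : Measurable v)
    (hu2 : Integrable (fun x => u x ^ 2)) (hv2 : Integrable (fun x => v x ^ 2))
    (hu0 : ∀ᵐ x ∂volume, x ∉ Ω → u x = 0) (hv0 : ∀ᵐ x ∂volume, x ∉ Ω → v x = 0) :
    ∫ p in {p : Eucl n × Eucl n |
        p.1 ∈ interDom Ω lam ∧ p.2 ∈ Ω ∪ interDom Ω lam ∧ lam ≤ ‖p.2 - p.1‖},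
        |u p.2 * v p.2| / ‖p.2 - p.1‖ ^ ((n : ℝ) + 2 * s) ≤
      (n : ℝ) * unitBallVol n / (2 * s * (lam - Metric.diam Ω) ^ (2 * s)) *
        L2NormOn Ω u * L2NormOn Ω v :=
  stmt6_general n s hs Ω lam hlam u v hu hv hu2 hv2 hu0 hv0
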